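/- Let X = ℝ^n with the Euclidean distance and let p ≥ 1. Let P₀, P₁ be Borel probability measures on ℝ^n with finite p-th moments, and let π be an optimal transport plan between them, i.e. a coupling of P₀ and P₁ such that ∫ ‖x − y‖^p dπ(x, y) = W_p(P₀, P₁)^p. For t ∈ [0, 1] define P_t as the pushforward of π under the map (x, y) ↦ (1 − t)·x + t·y. Then for all t, t' ∈ [0, 1], W_p(P_t, P_{t'}) = |t − t'|·W_p(P₀, P₁); that is, the displacement curve is a constant speed minimal geodesic for W_p. -/
import Mathlib


open MeasureTheory Set

/-- `π` is a coupling of `Q` and `P` : its marginals are `Q` and `P`. -/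
def IsCoupling {E : Type*} [MeasurableSpace E] (π : Measure (E × E))
    (Q P : Measure E) : Prop :=
  π.map Prod.fst = Q ∧ π.map Prod.snd = P

/-- The `p`-Wasserstein distance on `ℝⁿ` :
`W_p(Q,P) = (inf over couplings π of ∫ ‖x − y‖^p dπ)^(1/p)`. -/
noncomputable def Wp {E : Type*} [NormedAddCommGroup E] [MeasurableSpace E]
    (p : ℝ) (Q P : Measure E) : ℝ :=
  (sInf {r | ∃ π : Measure (E × E), IsCoupling π Q P ∧
      r = ∫ q, ‖q.1 - q.2‖ ^ p ∂π}) ^ (1 / p)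

namespace WpAux

open ProbabilityTheory
open scoped ENNReal

variable {E : Type*} [NormedAddCommGroup E] [MeasurableSpace E]

/-- The set of transport costs between `Q` and `P`. -/
def costS (p : ℝ) (Q P : Measure E) : Set ℝ :=
  {r | ∃ π : Measure (E × E), IsCoupling π Q P ∧ r = ∫ q, ‖q.1 - q.2‖ ^ p ∂π}

lemma Wp_eq (p : ℝ) (Q P : Measure E) : Wp p Q P = (sInf (costS p Q P)) ^ (1 / p) := rfl

lemma costS_nonneg {p : ℝ} {Q P : Measure E} {r : ℝ} (hr : r ∈ costS p Q P) : 0 ≤ r := by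
  obtain ⟨π, -, rfl⟩ := hr
  exact integral_nonneg fun q => Real.rpow_nonneg (norm_nonneg _) p

lemma costS_bddBelow (p : ℝ) (Q P : Measure E) : BddBelow (costS p Q P) :=
  ⟨0, fun r hr => costS_nonneg hr⟩

lemma sInf_costS_nonneg (p : ℝ) (Q P : Measure E) : 0 ≤ sInf (costS p Q P) := by
  rcases eq_empty_or_nonempty (costS p Q P) with h | h
  · simp [h, Real.sInf_empty]
  · exact le_csInf h fun r hr => costS_nonneg hr

lemma Wp_nonneg (p : ℝ) (Q P : Measure E) : 0 ≤ Wp p Q P :=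
  Real.rpow_nonneg (sInf_costS_nonneg p Q P) _

lemma coupling_isProbabilityMeasure {π : Measure (E × E)} {Q P : Measure E}
    (h : IsCoupling π Q P) [IsProbabilityMeasure Q] : IsProbabilityMeasure π := by
  constructor
  have : π.map Prod.fst univ = π univ := by
    rw [Measure.map_apply measurable_fst MeasurableSet.univ, preimage_univ]
  rw [← this, h.1]
  exact measure_univ

lemma two_aux {p a b : ℝ} (hp : 1 ≤ p) (ha : 0 ≤ a) (hb : 0 ≤ b) :
    (a + b) ^ p ≤ 2 ^ p * (a ^ p + b ^ p) := by
  have hp0 : (0:ℝ) ≤ p := le_trans zero_le_one hp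
  have h1 : a + b ≤ 2 * max a b := by
    rcases le_total a b with h | h
    · simp [max_eq_right h]; nlinarith [le_max_right a b]
    · simp [max_eq_left h]; nlinarith [le_max_left a b]
  calc (a + b) ^ p ≤ (2 * max a b) ^ p :=
        Real.rpow_le_rpow (by positivity) h1 hp0
    _ = 2 ^ p * (max a b) ^ p := Real.mul_rpow (by norm_num) (le_max_of_le_left ha)
    _ ≤ 2 ^ p * (a ^ p + b ^ p) := by
        gcongr
        rcases le_total a b with h | h
        · rw [max_eq_right h]; nlinarith [Real.rpow_nonneg ha p]
        · rw [max_eq_left h]; nlinarith [Real.rpow_nonneg hb p]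

variable {p : ℝ}

lemma cost_continuous (hp : 0 ≤ p) :
    Continuous (fun q : E × E => ‖q.1 - q.2‖ ^ p) := by
  have : Continuous (fun q : E × E => ‖q.1 - q.2‖) :=
    (continuous_fst.sub continuous_snd).norm
  exact this.rpow_const fun q => Or.inr hp

section Meas

variable [OpensMeasurableSpace E] [SecondCountableTopology E]

lemma cost_aesm (hp : 0 ≤ p) (m : Measure (E × E)) :
    AEStronglyMeasurable (fun q : E × E => ‖q.1 - q.2‖ ^ p) m :=
  (cost_continuous hp).aestronglyMeasurable

lemma norm_rpow_aesm (hp : 0 ≤ p) (m : Measure E) :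
    AEStronglyMeasurable (fun x : E => ‖x‖ ^ p) m := by
  refine Continuous.aestronglyMeasurable ?_
  exact continuous_norm.rpow_const fun q => Or.inr hp

lemma integrable_marginal_fst (hp : 0 ≤ p) {m : Measure (E × E)} {Q P : Measure E}
    (hm : IsCoupling m Q P) (hQ : Integrable (fun x => ‖x‖ ^ p) Q) :
    Integrable (fun q : E × E => ‖q.1‖ ^ p) m := by
  rw [← hm.1] at hQ
  exact (integrable_map_measure (norm_rpow_aesm hp _) measurable_fst.aemeasurable).mp hQ

lemma integrable_marginal_snd (hp : 0 ≤ p) {m : Measure (E × E)} {Q P : Measure E}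
    (hm : IsCoupling m Q P) (hP : Integrable (fun x => ‖x‖ ^ p) P) :
    Integrable (fun q : E × E => ‖q.2‖ ^ p) m := by
  rw [← hm.2] at hP
  exact (integrable_map_measure (norm_rpow_aesm hp _) measurable_snd.aemeasurable).mp hP

/-- Integrability of `‖a•x + b•y‖^p` over a measure with both marginals having
finite `p`-th moments. -/
lemma integrable_smul_add [NormedSpace ℝ E] (hp : 1 ≤ p) {m : Measure (E × E)}
    (h1 : Integrable (fun q : E × E => ‖q.1‖ ^ p) m)
    (h2 : Integrable (fun q : E × E => ‖q.2‖ ^ p) m) (a b : ℝ) :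
    Integrable (fun q : E × E => ‖a • q.1 + b • q.2‖ ^ p) m := by
  have hp0 : (0:ℝ) ≤ p := le_trans zero_le_one hp
  set K : ℝ := |a| + |b| + 1 with hK
  have hK1 : (1:ℝ) ≤ K := by
    have := abs_nonneg a; have := abs_nonneg b; linarith
  have hKpos : (0:ℝ) < K := lt_of_lt_of_le zero_lt_one hK1
  have hbound : ∀ q : E × E, ‖a • q.1 + b • q.2‖ ^ p ≤
      K ^ p * (2 ^ p * (‖q.1‖ ^ p + ‖q.2‖ ^ p)) := by
    intro q
    have h1' : ‖a • q.1 + b • q.2‖ ≤ K * (‖q.1‖ + ‖q.2‖) := by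
      calc ‖a • q.1 + b • q.2‖ ≤ ‖a • q.1‖ + ‖b • q.2‖ := norm_add_le _ _
        _ = |a| * ‖q.1‖ + |b| * ‖q.2‖ := by rw [norm_smul, norm_smul, Real.norm_eq_abs,
            Real.norm_eq_abs]
        _ ≤ K * (‖q.1‖ + ‖q.2‖) := by
            have := norm_nonneg q.1; have := norm_nonneg q.2
            have := abs_nonneg a; have := abs_nonneg b
            nlinarith
    calc ‖a • q.1 + b • q.2‖ ^ p ≤ (K * (‖q.1‖ + ‖q.2‖)) ^ p :=
          Real.rpow_le_rpow (norm_nonneg _) h1' hp0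
      _ = K ^ p * (‖q.1‖ + ‖q.2‖) ^ p := Real.mul_rpow (le_of_lt hKpos) (by positivity)
      _ ≤ K ^ p * (2 ^ p * (‖q.1‖ ^ p + ‖q.2‖ ^ p)) :=
          mul_le_mul_of_nonneg_left (two_aux hp (norm_nonneg _) (norm_nonneg _))
            (Real.rpow_nonneg (le_of_lt hKpos) p)
  have hmeas : AEStronglyMeasurable (fun q : E × E => ‖a • q.1 + b • q.2‖ ^ p) m := by
    refine Continuous.aestronglyMeasurable ?_
    have : Continuous (fun q : E × E => ‖a • q.1 + b • q.2‖) :=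
      ((continuous_fst.const_smul a).add (continuous_snd.const_smul b)).norm
    exact this.rpow_const fun q => Or.inr hp0
  refine Integrable.mono (((h1.add h2).const_mul ((2:ℝ) ^ p)).const_mul (K ^ p)) hmeas ?_
  filter_upwards with q
  rw [Real.norm_eq_abs, abs_of_nonneg (by positivity)]
  refine le_trans (hbound q) ?_
  rw [Real.norm_eq_abs]
  exact le_abs_self _

/-- Integrability of the transport cost for couplings with moment conditions. -/
lemma integrable_cost [NormedSpace ℝ E] (hp : 1 ≤ p) {m : Measure (E × E)} {Q P : Measure E}
    (hm : IsCoupling m Q P)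
    (hQ : Integrable (fun x => ‖x‖ ^ p) Q) (hP : Integrable (fun x => ‖x‖ ^ p) P) :
    Integrable (fun q : E × E => ‖q.1 - q.2‖ ^ p) m := by
  have hp0 : (0:ℝ) ≤ p := le_trans zero_le_one hp
  have := integrable_smul_add hp (integrable_marginal_fst hp0 hm hQ)
    (integrable_marginal_snd hp0 hm hP) 1 (-1)
  simpa [sub_eq_add_neg] using this

end Meas

section Meas2

variable [OpensMeasurableSpace E] [SecondCountableTopology E]

/-- Bridge between the Bochner cost integral and the `lintegral` of the
`ℝ≥0∞`-valued cost. -/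
lemma lintegral_cost_eq (hp : 0 ≤ p) {m : Measure (E × E)}
    (hint : Integrable (fun q : E × E => ‖q.1 - q.2‖ ^ p) m) :
    ∫⁻ q, (ENNReal.ofReal ‖q.1 - q.2‖) ^ p ∂m
      = ENNReal.ofReal (∫ q, ‖q.1 - q.2‖ ^ p ∂m) := by
  rw [ofReal_integral_eq_lintegral_ofReal hint
    (ae_of_all _ fun q => Real.rpow_nonneg (norm_nonneg _) p)]
  congr 1
  ext q
  rw [ENNReal.ofReal_rpow_of_nonneg (norm_nonneg _) hp]

end Meas2

lemma Wp_le_of_mem {Q P : Measure E} {r : ℝ} (hp : 0 < p) (hr : r ∈ costS p Q P) :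
    Wp p Q P ≤ r ^ (1 / p) := by
  rw [Wp_eq]
  exact Real.rpow_le_rpow (sInf_costS_nonneg p Q P)
    (csInf_le (costS_bddBelow p Q P) hr) (by positivity)

lemma mem_costS_swap [OpensMeasurableSpace E] [SecondCountableTopology E]
    (hp : 0 ≤ p) {Q P : Measure E} {r : ℝ} (hr : r ∈ costS p Q P) :
    r ∈ costS p P Q := by
  obtain ⟨m, hm, rfl⟩ := hr
  refine ⟨m.map Prod.swap, ⟨?_, ?_⟩, ?_⟩
  · rw [Measure.map_map measurable_fst measurable_swap]
    exact hm.2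
  · rw [Measure.map_map measurable_snd measurable_swap]
    exact hm.1
  · rw [integral_map measurable_swap.aemeasurable]
    · simp only [Prod.fst_swap, Prod.snd_swap]
      congr 1
      ext q
      rw [norm_sub_rev]
    · exact cost_aesm hp _

section Glue

variable [NormedSpace ℝ E] [BorelSpace E] [SecondCountableTopology E]
  [StandardBorelSpace E] [Nonempty E]

open scoped ProbabilityTheory

/-- **Gluing lemma.** Given couplings `μA` of `(μ, Q)`, `σ` of `(μ, ν)` and `μB` of `(ν, P)`,
there is a transport cost `r` between `Q` and `P` with
`r^(1/p) ≤ a^(1/p) + c^(1/p) + b^(1/p)` where `a, c, b` are the three costs. -/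
lemma glue_bound (hp : 1 ≤ p) {μ ν Q P : Measure E}
    [IsProbabilityMeasure μ] [IsProbabilityMeasure ν]
    [IsProbabilityMeasure Q] [IsProbabilityMeasure P]
    (hμ : Integrable (fun x => ‖x‖ ^ p) μ) (hν : Integrable (fun x => ‖x‖ ^ p) ν)
    (hQ : Integrable (fun x => ‖x‖ ^ p) Q) (hP : Integrable (fun x => ‖x‖ ^ p) P)
    {μA σ μB : Measure (E × E)}
    (hA : IsCoupling μA μ Q) (hσ : IsCoupling σ μ ν) (hB : IsCoupling μB ν P) :
    ∃ r ∈ costS p Q P,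
      r ^ (1/p) ≤ (∫ q, ‖q.1 - q.2‖ ^ p ∂μA) ^ (1/p)
        + (∫ q, ‖q.1 - q.2‖ ^ p ∂σ) ^ (1/p) + (∫ q, ‖q.1 - q.2‖ ^ p ∂μB) ^ (1/p) := by
  have hp0 : (0:ℝ) ≤ p := le_trans zero_le_one hp
  have hp0' : (0:ℝ) < p := lt_of_lt_of_le zero_lt_one hp
  have hip : (0:ℝ) ≤ 1/p := by positivity
  haveI : IsProbabilityMeasure μA := coupling_isProbabilityMeasure hA
  haveI : IsProbabilityMeasure σ := coupling_isProbabilityMeasure hσ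
  haveI : IsProbabilityMeasure μB := coupling_isProbabilityMeasure hB
  set κ : Kernel E E := μA.condKernel with hκdef
  set η : Kernel E E := μB.condKernel with hηdef
  have hdisA : μ ⊗ₘ κ = μA := by
    have h1 : μA.fst = μ := hA.1
    rw [← h1]; exact μA.disintegrate κ
  have hdisB : ν ⊗ₘ η = μB := by
    have h1 : μB.fst = ν := hB.1
    rw [← h1]; exact μB.disintegrate η
  haveI : IsMarkovKernel (κ.comap Prod.fst measurable_fst) :=
    Kernel.IsMarkovKernel.comap κ (measurable_fst : Measurable (Prod.fst : E × E → E))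
  haveI : IsMarkovKernel (η.comap Prod.snd measurable_snd) :=
    Kernel.IsMarkovKernel.comap η (measurable_snd : Measurable (Prod.snd : E × E → E))
  set K : Kernel (E × E) (E × E) :=
    (κ.comap Prod.fst measurable_fst) ×ₖ (η.comap Prod.snd measurable_snd) with hKdef
  haveI : IsMarkovKernel K := by rw [hKdef]; infer_instance
  set ρ : Measure ((E × E) × (E × E)) := σ ⊗ₘ K with hρdef
  have hg1 : Measurable (fun q : (E × E) × (E × E) => (q.1.1, q.2.1)) :=
    (measurable_fst.fst).prodMk (measurable_snd.fst)
  have hg2 : Measurable (fun q : (E × E) × (E × E) => (q.1.2, q.2.2)) :=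
    (measurable_fst.snd).prodMk (measurable_snd.snd)
  -- first marginal pair
  have hm1 : ρ.map (fun q : (E × E) × (E × E) => (q.1.1, q.2.1)) = μA := by
    ext s hs
    rw [Measure.map_apply hg1 hs, hρdef, Measure.compProd_apply (hg1 hs)]
    have hK : ∀ uv : E × E,
        K uv (Prod.mk uv ⁻¹' ((fun q : (E × E) × (E × E) => (q.1.1, q.2.1)) ⁻¹' s))
          = κ uv.1 (Prod.mk uv.1 ⁻¹' s) := by
      intro uv
      have hset : Prod.mk uv ⁻¹' ((fun q : (E × E) × (E × E) => (q.1.1, q.2.1)) ⁻¹' s)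
          = (Prod.mk uv.1 ⁻¹' s) ×ˢ univ := by
        ext xw; simp [Set.mem_prod]
      rw [hset, hKdef, Kernel.prod_apply, Kernel.comap_apply, Kernel.comap_apply,
        Measure.prod_prod, measure_univ, mul_one]
    simp_rw [hK]
    have : ∫⁻ uv, κ uv.1 (Prod.mk uv.1 ⁻¹' s) ∂σ
        = ∫⁻ u, κ u (Prod.mk u ⁻¹' s) ∂μ := by
      rw [← hσ.1, lintegral_map (Kernel.measurable_kernel_prodMk_left hs) measurable_fst]
    rw [this, ← Measure.compProd_apply hs, hdisA]
  -- second marginal pair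
  have hm2 : ρ.map (fun q : (E × E) × (E × E) => (q.1.2, q.2.2)) = μB := by
    ext s hs
    rw [Measure.map_apply hg2 hs, hρdef, Measure.compProd_apply (hg2 hs)]
    have hK : ∀ uv : E × E,
        K uv (Prod.mk uv ⁻¹' ((fun q : (E × E) × (E × E) => (q.1.2, q.2.2)) ⁻¹' s))
          = η uv.2 (Prod.mk uv.2 ⁻¹' s) := by
      intro uv
      have hset : Prod.mk uv ⁻¹' ((fun q : (E × E) × (E × E) => (q.1.2, q.2.2)) ⁻¹' s)
          = univ ×ˢ (Prod.mk uv.2 ⁻¹' s) := by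
        ext xw; simp [Set.mem_prod]
      rw [hset, hKdef, Kernel.prod_apply, Kernel.comap_apply, Kernel.comap_apply,
        Measure.prod_prod, measure_univ, one_mul]
    simp_rw [hK]
    have : ∫⁻ uv, η uv.2 (Prod.mk uv.2 ⁻¹' s) ∂σ
        = ∫⁻ v, η v (Prod.mk v ⁻¹' s) ∂ν := by
      rw [← hσ.2, lintegral_map (Kernel.measurable_kernel_prodMk_left hs) measurable_snd]
    rw [this, ← Measure.compProd_apply hs, hdisB]
  have hm3 : ρ.map Prod.fst = σ := Measure.fst_compProd σ K
  -- the glued coupling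
  have hcoup : IsCoupling (ρ.map Prod.snd) Q P := by
    constructor
    · rw [Measure.map_map measurable_fst measurable_snd, ← hA.2, ← hm1,
        Measure.map_map measurable_snd hg1]
      rfl
    · rw [Measure.map_map measurable_snd measurable_snd, ← hB.2, ← hm2,
        Measure.map_map measurable_snd hg2]
      rfl
  have hint' : Integrable (fun q : E × E => ‖q.1 - q.2‖ ^ p) (ρ.map Prod.snd) :=
    integrable_cost hp hcoup hQ hP
  have hintA : Integrable (fun q : E × E => ‖q.1 - q.2‖ ^ p) μA :=
    integrable_cost hp hA hμ hQ
  have hintσ : Integrable (fun q : E × E => ‖q.1 - q.2‖ ^ p) σ :=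
    integrable_cost hp hσ hμ hν
  have hintB : Integrable (fun q : E × E => ‖q.1 - q.2‖ ^ p) μB :=
    integrable_cost hp hB hν hP
  refine ⟨∫ q, ‖q.1 - q.2‖ ^ p ∂(ρ.map Prod.snd), ⟨ρ.map Prod.snd, hcoup, rfl⟩, ?_⟩
  -- now the Minkowski-type estimate, carried out in `ℝ≥0∞`
  set f1 : (E × E) × (E × E) → ℝ≥0∞ := fun q => ENNReal.ofReal ‖q.1.1 - q.2.1‖ with hf1
  set f2 : (E × E) × (E × E) → ℝ≥0∞ := fun q => ENNReal.ofReal ‖q.1.1 - q.1.2‖ with hf2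
  set f3 : (E × E) × (E × E) → ℝ≥0∞ := fun q => ENNReal.ofReal ‖q.1.2 - q.2.2‖ with hf3
  have m_f1 : Measurable f1 :=
    ((measurable_fst.fst.sub measurable_snd.fst).norm).ennreal_ofReal
  have m_f2 : Measurable f2 :=
    ((measurable_fst.fst.sub measurable_fst.snd).norm).ennreal_ofReal
  have m_f3 : Measurable f3 :=
    ((measurable_fst.snd.sub measurable_snd.snd).norm).ennreal_ofReal
  have hcostMeas : Measurable (fun r : E × E => (ENNReal.ofReal ‖r.1 - r.2‖) ^ p) :=
    (((measurable_fst.sub measurable_snd).norm).ennreal_ofReal).pow_const _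
  have hpt : ∀ q : (E × E) × (E × E),
      ENNReal.ofReal ‖q.2.1 - q.2.2‖ ≤ (f1 + f2 + f3) q := by
    intro q
    have h1 := norm_sub_le_norm_sub_add_norm_sub q.2.1 q.1.1 q.2.2
    have h2 := norm_sub_le_norm_sub_add_norm_sub q.1.1 q.1.2 q.2.2
    have h3 : ‖q.2.1 - q.1.1‖ = ‖q.1.1 - q.2.1‖ := norm_sub_rev _ _
    have htri : ‖q.2.1 - q.2.2‖ ≤ ‖q.1.1 - q.2.1‖ + ‖q.1.1 - q.1.2‖ + ‖q.1.2 - q.2.2‖ := by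
      linarith
    simp only [Pi.add_apply, hf1, hf2, hf3]
    rw [← ENNReal.ofReal_add (norm_nonneg _) (norm_nonneg _),
      ← ENNReal.ofReal_add (by positivity) (norm_nonneg _)]
    exact ENNReal.ofReal_le_ofReal htri
  -- identify the four lintegrals
  have e0 : ∫⁻ q, (ENNReal.ofReal ‖q.2.1 - q.2.2‖) ^ p ∂ρ
      = ENNReal.ofReal (∫ q, ‖q.1 - q.2‖ ^ p ∂(ρ.map Prod.snd)) := by
    rw [← lintegral_cost_eq hp0 hint', lintegral_map hcostMeas measurable_snd]
  have e1 : ∫⁻ q, (f1 q) ^ p ∂ρ = ENNReal.ofReal (∫ q, ‖q.1 - q.2‖ ^ p ∂μA) := by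
    rw [← lintegral_cost_eq hp0 hintA, ← hm1, lintegral_map hcostMeas hg1]
  have e2 : ∫⁻ q, (f2 q) ^ p ∂ρ = ENNReal.ofReal (∫ q, ‖q.1 - q.2‖ ^ p ∂σ) := by
    rw [← lintegral_cost_eq hp0 hintσ, ← hm3, lintegral_map hcostMeas measurable_fst]
  have e3 : ∫⁻ q, (f3 q) ^ p ∂ρ = ENNReal.ofReal (∫ q, ‖q.1 - q.2‖ ^ p ∂μB) := by
    rw [← lintegral_cost_eq hp0 hintB, ← hm2, lintegral_map hcostMeas hg2]
  -- Minkowski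
  have hMink : (∫⁻ q, (ENNReal.ofReal ‖q.2.1 - q.2.2‖) ^ p ∂ρ) ^ (1/p)
      ≤ (∫⁻ q, (f1 q) ^ p ∂ρ) ^ (1/p) + (∫⁻ q, (f2 q) ^ p ∂ρ) ^ (1/p)
        + (∫⁻ q, (f3 q) ^ p ∂ρ) ^ (1/p) := by
    calc (∫⁻ q, (ENNReal.ofReal ‖q.2.1 - q.2.2‖) ^ p ∂ρ) ^ (1/p)
        ≤ (∫⁻ q, ((f1 + f2 + f3) q) ^ p ∂ρ) ^ (1/p) := by
          refine ENNReal.rpow_le_rpow ?_ (by positivity)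
          exact lintegral_mono fun q => ENNReal.rpow_le_rpow (hpt q) hp0
      _ ≤ (∫⁻ q, ((f1 + f2) q) ^ p ∂ρ) ^ (1/p) + (∫⁻ q, (f3 q) ^ p ∂ρ) ^ (1/p) :=
          ENNReal.lintegral_Lp_add_le (m_f1.add m_f2).aemeasurable m_f3.aemeasurable hp
      _ ≤ (∫⁻ q, (f1 q) ^ p ∂ρ) ^ (1/p) + (∫⁻ q, (f2 q) ^ p ∂ρ) ^ (1/p)
            + (∫⁻ q, (f3 q) ^ p ∂ρ) ^ (1/p) := by
          gcongr
          exact ENNReal.lintegral_Lp_add_le m_f1.aemeasurable m_f2.aemeasurable hp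
  rw [e0, e1, e2, e3] at hMink
  -- back to the reals
  have hr0 : 0 ≤ ∫ q, ‖q.1 - q.2‖ ^ p ∂(ρ.map Prod.snd) :=
    integral_nonneg fun q => Real.rpow_nonneg (norm_nonneg _) p
  have ha0 : 0 ≤ ∫ q, ‖q.1 - q.2‖ ^ p ∂μA :=
    integral_nonneg fun q => Real.rpow_nonneg (norm_nonneg _) p
  have hc0 : 0 ≤ ∫ q, ‖q.1 - q.2‖ ^ p ∂σ :=
    integral_nonneg fun q => Real.rpow_nonneg (norm_nonneg _) p
  have hb0 : 0 ≤ ∫ q, ‖q.1 - q.2‖ ^ p ∂μB :=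
    integral_nonneg fun q => Real.rpow_nonneg (norm_nonneg _) p
  rw [ENNReal.ofReal_rpow_of_nonneg hr0 hip, ENNReal.ofReal_rpow_of_nonneg ha0 hip,
    ENNReal.ofReal_rpow_of_nonneg hc0 hip, ENNReal.ofReal_rpow_of_nonneg hb0 hip,
    ← ENNReal.ofReal_add (by positivity) (by positivity),
    ← ENNReal.ofReal_add (by positivity) (by positivity)] at hMink
  exact (ENNReal.ofReal_le_ofReal_iff (by positivity)).mp hMink

end Glue

end WpAux

open WpAux

/-- **Displacement curves are constant speed minimal geodesics for `W_p`.**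
Let `P₀, P₁` be Borel probability measures on Euclidean `ℝⁿ` with finite `p`-th moments
(`p ≥ 1`), and let `π` be an optimal transport plan between them. Defining the
displacement curve `P_t` as the pushforward of `π` under `(x,y) ↦ (1−t)x + ty`, one has
`W_p(P_t, P_{t'}) = |t − t'| · W_p(P₀, P₁)` for all `t, t' ∈ [0,1]`. -/
theorem displacement_curve_constant_speed_geodesic
    {n : ℕ} (p : ℝ) (hp : 1 ≤ p)
    (P₀ P₁ : Measure (EuclideanSpace ℝ (Fin n)))
    [IsProbabilityMeasure P₀] [IsProbabilityMeasure P₁]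
    (h₀ : Integrable (fun x => ‖x‖ ^ p) P₀)
    (h₁ : Integrable (fun x => ‖x‖ ^ p) P₁)
    (π : Measure (EuclideanSpace ℝ (Fin n) × EuclideanSpace ℝ (Fin n)))
    (hπ : IsCoupling π P₀ P₁)
    (hopt : (∫ q, ‖q.1 - q.2‖ ^ p ∂π) = Wp p P₀ P₁ ^ p) :
    ∀ t ∈ Icc (0 : ℝ) 1, ∀ t' ∈ Icc (0 : ℝ) 1,
      Wp p (π.map fun q => (1 - t) • q.1 + t • q.2)
          (π.map fun q => (1 - t') • q.1 + t' • q.2)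
        = |t - t'| * Wp p P₀ P₁ := by
  set X := EuclideanSpace ℝ (Fin n) with hX
  have hp0 : (0:ℝ) ≤ p := le_trans zero_le_one hp
  have hppos : (0:ℝ) < p := lt_of_lt_of_le zero_lt_one hp
  have hpne : p ≠ 0 := ne_of_gt hppos
  haveI hπprob : IsProbabilityMeasure π := coupling_isProbabilityMeasure hπ
  set W := Wp p P₀ P₁ with hW
  have hWnn : 0 ≤ W := Wp_nonneg p P₀ P₁
  set C := ∫ q, ‖q.1 - q.2‖ ^ p ∂π with hC
  have hCW : C = W ^ p := hopt
  have hCnn : 0 ≤ C := integral_nonneg fun q => Real.rpow_nonneg (norm_nonneg _) p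
  have hCpow : C ^ (1/p) = W := by
    rw [hCW, ← Real.rpow_mul hWnn, mul_one_div_cancel hpne, Real.rpow_one]
  have hTmeas : ∀ t : ℝ, Measurable (fun q : X × X => (1 - t) • q.1 + t • q.2) :=
    fun t => (measurable_fst.const_smul (1 - t)).add (measurable_snd.const_smul t)
  have h1π : Integrable (fun q : X × X => ‖q.1‖ ^ p) π :=
    integrable_marginal_fst hp0 hπ h₀
  have h2π : Integrable (fun q : X × X => ‖q.2‖ ^ p) π :=
    integrable_marginal_snd hp0 hπ h₁
  have hPprob : ∀ t : ℝ,
      IsProbabilityMeasure (π.map fun q : X × X => (1 - t) • q.1 + t • q.2) :=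
    fun t => Measure.isProbabilityMeasure_map (hTmeas t).aemeasurable
  have hPmom : ∀ t : ℝ,
      Integrable (fun x => ‖x‖ ^ p) (π.map fun q : X × X => (1 - t) • q.1 + t • q.2) := by
    intro t
    rw [integrable_map_measure (norm_rpow_aesm hp0 _) (hTmeas t).aemeasurable]
    exact integrable_smul_add hp h1π h2π (1 - t) t
  -- the upper-bound coupling
  have hmem : ∀ t t' : ℝ, (|t - t'| ^ p * C) ∈
      costS p (π.map fun q : X × X => (1 - t) • q.1 + t • q.2)
        (π.map fun q : X × X => (1 - t') • q.1 + t' • q.2) := by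
    intro t t'
    have hpair : Measurable (fun q : X × X =>
        ((1 - t) • q.1 + t • q.2, (1 - t') • q.1 + t' • q.2)) :=
      (hTmeas t).prodMk (hTmeas t')
    refine ⟨π.map (fun q : X × X =>
        ((1 - t) • q.1 + t • q.2, (1 - t') • q.1 + t' • q.2)), ⟨?_, ?_⟩, ?_⟩
    · rw [Measure.map_map measurable_fst hpair]; rfl
    · rw [Measure.map_map measurable_snd hpair]; rfl
    · rw [integral_map hpair.aemeasurable (cost_aesm hp0 _)]
      have hval : ∀ q : X × X,
          ‖((1 - t) • q.1 + t • q.2) - ((1 - t') • q.1 + t' • q.2)‖ ^ p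
            = |t - t'| ^ p * ‖q.1 - q.2‖ ^ p := by
        intro q
        have hv : ((1 - t) • q.1 + t • q.2) - ((1 - t') • q.1 + t' • q.2)
            = (t' - t) • (q.1 - q.2) := by module
        rw [hv, norm_smul, Real.norm_eq_abs,
          Real.mul_rpow (abs_nonneg _) (norm_nonneg _), abs_sub_comm]
      simp_rw [hval]
      rw [integral_const_mul]
  have hub : ∀ t t' : ℝ,
      sInf (costS p (π.map fun q : X × X => (1 - t) • q.1 + t • q.2)
        (π.map fun q : X × X => (1 - t') • q.1 + t' • q.2)) ≤ |t - t'| ^ p * C :=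
    fun t t' => csInf_le (costS_bddBelow _ _ _) (hmem t t')
  -- lower bound via gluing
  have hlb : ∀ t t' : ℝ, t ∈ Icc (0:ℝ) 1 → t' ∈ Icc (0:ℝ) 1 → t ≤ t' →
      |t - t'| ^ p * C ≤
        sInf (costS p (π.map fun q : X × X => (1 - t) • q.1 + t • q.2)
          (π.map fun q : X × X => (1 - t') • q.1 + t' • q.2)) := by
    intro t t' ht ht' htt
    refine le_csInf ⟨_, hmem t t'⟩ ?_
    rintro r ⟨σ, hσc, rfl⟩
    haveI := hPprob t
    haveI := hPprob t'
    -- coupling of (P t, P₀)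
    have hpairA : Measurable (fun q : X × X => ((1 - t) • q.1 + t • q.2, q.1)) :=
      (hTmeas t).prodMk measurable_fst
    have hAc : IsCoupling (π.map (fun q : X × X => ((1 - t) • q.1 + t • q.2, q.1)))
        (π.map fun q : X × X => (1 - t) • q.1 + t • q.2) P₀ := by
      constructor
      · rw [Measure.map_map measurable_fst hpairA]; rfl
      · rw [Measure.map_map measurable_snd hpairA]; exact hπ.1
    have hpairB : Measurable (fun q : X × X => ((1 - t') • q.1 + t' • q.2, q.2)) :=
      (hTmeas t').prodMk measurable_snd
    have hBc : IsCoupling (π.map (fun q : X × X => ((1 - t') • q.1 + t' • q.2, q.2)))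
        (π.map fun q : X × X => (1 - t') • q.1 + t' • q.2) P₁ := by
      constructor
      · rw [Measure.map_map measurable_fst hpairB]; rfl
      · rw [Measure.map_map measurable_snd hpairB]; exact hπ.2
    have hcostA : (∫ q, ‖q.1 - q.2‖ ^ p
        ∂(π.map (fun q : X × X => ((1 - t) • q.1 + t • q.2, q.1)))) = t ^ p * C := by
      rw [integral_map hpairA.aemeasurable (cost_aesm hp0 _)]
      have hval : ∀ q : X × X,
          ‖((1 - t) • q.1 + t • q.2) - q.1‖ ^ p = t ^ p * ‖q.1 - q.2‖ ^ p := by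
        intro q
        have hv : ((1 - t) • q.1 + t • q.2) - q.1 = (-t) • (q.1 - q.2) := by module
        rw [hv, norm_smul, Real.norm_eq_abs, abs_neg, abs_of_nonneg ht.1,
          Real.mul_rpow ht.1 (norm_nonneg _)]
      simp_rw [hval]
      rw [integral_const_mul]
    have hcostB : (∫ q, ‖q.1 - q.2‖ ^ p
        ∂(π.map (fun q : X × X => ((1 - t') • q.1 + t' • q.2, q.2)))) = (1 - t') ^ p * C := by
      rw [integral_map hpairB.aemeasurable (cost_aesm hp0 _)]
      have hval : ∀ q : X × X,
          ‖((1 - t') • q.1 + t' • q.2) - q.2‖ ^ p = (1 - t') ^ p * ‖q.1 - q.2‖ ^ p := by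
        intro q
        have hv : ((1 - t') • q.1 + t' • q.2) - q.2 = (1 - t') • (q.1 - q.2) := by module
        have h1t' : (0:ℝ) ≤ 1 - t' := by linarith [ht'.2]
        rw [hv, norm_smul, Real.norm_eq_abs, abs_of_nonneg h1t',
          Real.mul_rpow h1t' (norm_nonneg _)]
      simp_rw [hval]
      rw [integral_const_mul]
    obtain ⟨r', hr'mem, hr'⟩ := glue_bound hp (hPmom t) (hPmom t') h₀ h₁ hAc hσc hBc
    rw [hcostA, hcostB] at hr'
    have hWle : W ≤ r' ^ (1/p) := Wp_le_of_mem hppos hr'mem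
    have hr0 : (0:ℝ) ≤ ∫ q, ‖q.1 - q.2‖ ^ p ∂σ :=
      integral_nonneg fun q => Real.rpow_nonneg (norm_nonneg _) p
    have e1 : (t ^ p * C) ^ (1/p) = t * W := by
      rw [Real.mul_rpow (Real.rpow_nonneg ht.1 p) hCnn, ← Real.rpow_mul ht.1,
        mul_one_div_cancel hpne, Real.rpow_one, hCpow]
    have h1t' : (0:ℝ) ≤ 1 - t' := by linarith [ht'.2]
    have e2 : ((1 - t') ^ p * C) ^ (1/p) = (1 - t') * W := by
      rw [Real.mul_rpow (Real.rpow_nonneg h1t' p) hCnn, ← Real.rpow_mul h1t',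
        mul_one_div_cancel hpne, Real.rpow_one, hCpow]
    rw [e1, e2] at hr'
    have hchain : W ≤ t * W + (∫ q, ‖q.1 - q.2‖ ^ p ∂σ) ^ (1/p) + (1 - t') * W :=
      le_trans hWle hr'
    have h2 : (t' - t) * W ≤ (∫ q, ‖q.1 - q.2‖ ^ p ∂σ) ^ (1/p) := by linarith
    have h3 : ((t' - t) * W) ^ p ≤ ((∫ q, ‖q.1 - q.2‖ ^ p ∂σ) ^ (1/p)) ^ p :=
      Real.rpow_le_rpow (mul_nonneg (by linarith) hWnn) h2 hp0
    have h4 : ((∫ q, ‖q.1 - q.2‖ ^ p ∂σ) ^ (1/p)) ^ p = ∫ q, ‖q.1 - q.2‖ ^ p ∂σ := by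
      rw [← Real.rpow_mul hr0, one_div_mul_cancel hpne, Real.rpow_one]
    have h5 : ((t' - t) * W) ^ p = |t - t'| ^ p * C := by
      have habs : |t - t'| = t' - t := by
        rw [abs_sub_comm]; exact abs_of_nonneg (by linarith)
      rw [Real.mul_rpow (by linarith) hWnn, ← hCW, habs]
    rw [h4, h5] at h3
    exact h3
  -- assemble
  have key : ∀ t ∈ Icc (0:ℝ) 1, ∀ t' ∈ Icc (0:ℝ) 1, t ≤ t' →
      Wp p (π.map fun q : X × X => (1 - t) • q.1 + t • q.2)
        (π.map fun q : X × X => (1 - t') • q.1 + t' • q.2) = |t - t'| * W := by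
    intro t ht t' ht' htt
    rw [Wp_eq, le_antisymm (hub t t') (hlb t t' ht ht' htt),
      Real.mul_rpow (Real.rpow_nonneg (abs_nonneg _) p) hCnn,
      ← Real.rpow_mul (abs_nonneg _), mul_one_div_cancel hpne, Real.rpow_one, hCpow]
  intro t ht t' ht'
  rcases le_total t t' with h | h
  · exact key t ht t' ht' h
  · have hswap : Wp p (π.map fun q : X × X => (1 - t) • q.1 + t • q.2)
        (π.map fun q : X × X => (1 - t') • q.1 + t' • q.2)
        = Wp p (π.map fun q : X × X => (1 - t') • q.1 + t' • q.2)
          (π.map fun q : X × X => (1 - t) • q.1 + t • q.2) := by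
      rw [Wp_eq, Wp_eq]
      have hset : costS p (π.map fun q : X × X => (1 - t) • q.1 + t • q.2)
          (π.map fun q : X × X => (1 - t') • q.1 + t' • q.2)
          = costS p (π.map fun q : X × X => (1 - t') • q.1 + t' • q.2)
            (π.map fun q : X × X => (1 - t) • q.1 + t • q.2) :=
        Set.Subset.antisymm (fun r hr => mem_costS_swap hp0 hr)
          (fun r hr => mem_costS_swap hp0 hr)
      rw [hset]
    rw [hswap, key t' ht' t ht h, abs_sub_comm]
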